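/- Early-default advantage (Figure 9, reduced dynamics): in the symmetric system where v₁ and v₂ each have liability 1 and zero assets initially, if v₁ updates first then the forced sequence of updates is v₁ → u₂ → w₂ → v₁ → v₂ and the final stable state has r_{v₁} = 1 and r_{v₂} = 0; by symmetry, if v₂ updates first the final state has r_{v₁} = 0, r_{v₂} = 1. Hence v₁ avoids default in the final state if and only if v₁ is the first bank to report a default. -/

import Mathlib

/-!
After `v₁` reports default, every state of the dynamics has exactly one updatable bank and all
rates stay in `{0, 1}`: `u₂` defaults (it owes a CDS on `v₁`), then `w₂` (it owes a CDS on `u₂`),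
which pays `v₁` enough to recover, and `v₁`'s recovery wipes out `v₂`'s assets. The run is thus
forced and ends in the stable state where exactly `v₂, u₂, w₂` have defaulted. The case where `v₂`
moves first is the mirror image under the swap `v₁ ↔ v₂, u₁ ↔ u₂, w₁ ↔ w₂`, an automorphism of
the system.
-/

namespace Fig9

/-- The six banks of the Figure 9 system. -/
inductive Bank | v1 | v2 | u1 | u2 | w1 | w2
deriving DecidableEq

open Bank

/-- A state: the announced recovery rate of each bank. -/
abbrev St := Bank → ℝ

/-- The paper's recovery-rate function: `R(a,l) = 1` if `a ≥ l`, else `a/l` (so `R(a,0)=1`). -/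
noncomputable def Rfun (a l : ℝ) : ℝ := if a ≥ l then 1 else a / l

/-- Assets in the (symmetric) Figure 9 system: `v₁` receives CDS payments referencing `v₂`
and `w₂` (symmetrically for `v₂`), `u₁` receives a CDS payment referencing `u₂`
(symmetrically for `u₂`), and `w₁, w₂` have no assets. -/
def assets (r : St) : Bank → ℝ
  | v1 => (1 - r v2) + (1 - r w2)
  | v2 => (1 - r v1) + (1 - r w1)
  | u1 => 1 - r u2
  | u2 => 1 - r u1
  | w1 => 0
  | w2 => 0

/-- Liabilities: `v₁, v₂` each owe a debt of 1; `u₁` owes CDSs referencing `v₂` and `w₁`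
(symmetrically `u₂` references `v₁` and `w₂`); `w₁` owes a CDS referencing `u₁`
(symmetrically `w₂` references `u₂`). -/
def liab (r : St) : Bank → ℝ
  | v1 => 1
  | v2 => 1
  | u1 => (1 - r v2) + (1 - r w1)
  | u2 => (1 - r v1) + (1 - r w2)
  | w1 => 1 - r u1
  | w2 => 1 - r u2

/-- Bank `b` is updatable at `r` iff its announced rate differs from `R(a_b(r), l_b(r))`. -/
noncomputable def updatable (b : Bank) (r : St) : Prop :=
  r b ≠ Rfun (assets r b) (liab r b)

/-- Updating bank `b`. -/
noncomputable def upd (b : Bank) (r : St) : St :=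
  Function.update r b (Rfun (assets r b) (liab r b))

/-- Sequential reachability (reflexive-transitive closure of single updates). -/
inductive Reach : St → St → Prop
  | refl (r) : Reach r r
  | step (r s : St) (b : Bank) : Reach r s → updatable b s → Reach r (upd b s)

/-- The initial state. -/
def init : St := fun _ => 1

def Stable (r : St) : Prop := ∀ b, ¬ updatable b r

def OnlyUpdatable (b : Bank) (r : St) : Prop := ∀ c, updatable c r ↔ c = b

theorem Reach.eq_of_stable {r s : St} (hr : Stable r) (h : Reach r s) : s = r := by
  induction h with
  | refl => rfl
  | step s b _ hb ih => exact absurd (ih ▸ hb) (hr b)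

theorem Reach.eq_or_reach_upd {r s : St} {b : Bank} (hb : OnlyUpdatable b r) (h : Reach r s) :
    s = r ∨ Reach (upd b r) s := by
  induction h with
  | refl => exact Or.inl rfl
  | step s c _ hc ih =>
    refine Or.inr ?_
    rcases ih with rfl | ih
    · rw [(hb c).mp hc]
      exact Reach.refl _
    · exact ih.step _ _ _ hc

theorem Reach.reach_upd_of_stable {r s : St} {b : Bank} (hb : OnlyUpdatable b r) (h : Reach r s)
    (hs : Stable s) : Reach (upd b r) s := by
  rcases h.eq_or_reach_upd hb with rfl | h
  · exact absurd ((hb b).mpr rfl) (hs b)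
  · exact h

def swap : Bank → Bank
  | v1 => v2
  | v2 => v1
  | u1 => u2
  | u2 => u1
  | w1 => w2
  | w2 => w1

theorem swap_swap (b : Bank) : swap (swap b) = b := by
  cases b <;> rfl

theorem swap_injective : Function.Injective swap :=
  Function.LeftInverse.injective swap_swap

theorem updatable_comp_swap (b : Bank) (r : St) :
    updatable b (r ∘ swap) ↔ updatable (swap b) r := by
  cases b <;> rfl

theorem upd_comp_swap (b : Bank) (r : St) : upd b (r ∘ swap) = upd (swap b) r ∘ swap := by
  have h : Rfun (assets (r ∘ swap) b) (liab (r ∘ swap) b) =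
      Rfun (assets r (swap b)) (liab r (swap b)) := by
    cases b <;> rfl
  rw [upd, upd, h, Function.update_comp_eq_of_injective _ swap_injective]

theorem Stable.comp_swap {r : St} (hr : Stable r) : Stable (r ∘ swap) :=
  fun b => (updatable_comp_swap b r).not.mpr (hr (swap b))

theorem Reach.comp_swap {r s : St} (h : Reach r s) : Reach (r ∘ swap) (s ∘ swap) := by
  induction h with
  | refl => exact Reach.refl _
  | step s b _ hb ih =>
    rw [← swap_swap b, ← upd_comp_swap]
    exact ih.step _ _ _ ((updatable_comp_swap _ s).mpr ((swap_swap b).symm ▸ hb))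

def defaulted (D : Finset Bank) : St := fun b => if b ∈ D then 0 else 1

theorem updatable_init_iff (b : Bank) : updatable b init ↔ b = v1 ∨ b = v2 := by
  cases b <;> simp [updatable, init, assets, liab, Rfun]

theorem upd_v1_init : upd v1 init = defaulted {v1} := by
  funext b; cases b <;> simp [upd, Function.update, init, defaulted, Rfun, assets, liab]

theorem onlyUpdatable_u2 : OnlyUpdatable u2 (defaulted {v1}) := by
  intro b; cases b <;> simp [updatable, defaulted, assets, liab, Rfun]

theorem upd_u2 : upd u2 (defaulted {v1}) = defaulted {v1, u2} := by
  funext b; cases b <;> simp [upd, Function.update, defaulted, Rfun, assets, liab]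

theorem onlyUpdatable_w2 : OnlyUpdatable w2 (defaulted {v1, u2}) := by
  intro b; cases b <;> simp [updatable, defaulted, assets, liab, Rfun]

theorem upd_w2 : upd w2 (defaulted {v1, u2}) = defaulted {v1, u2, w2} := by
  funext b; cases b <;> simp [upd, Function.update, defaulted, Rfun, assets, liab]

theorem onlyUpdatable_v1 : OnlyUpdatable v1 (defaulted {v1, u2, w2}) := by
  intro b; cases b <;> simp [updatable, defaulted, assets, liab, Rfun]

theorem upd_v1 : upd v1 (defaulted {v1, u2, w2}) = defaulted {u2, w2} := by
  funext b; cases b <;> simp [upd, Function.update, defaulted, Rfun, assets, liab]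

theorem onlyUpdatable_v2 : OnlyUpdatable v2 (defaulted {u2, w2}) := by
  intro b; cases b <;> simp [updatable, defaulted, assets, liab, Rfun]

theorem upd_v2 : upd v2 (defaulted {u2, w2}) = defaulted {v2, u2, w2} := by
  funext b; cases b <;> simp [upd, Function.update, defaulted, Rfun, assets, liab]

theorem stable_final : Stable (defaulted {v2, u2, w2}) := by
  intro b; cases b <;> simp [updatable, defaulted, assets, liab, Rfun]

theorem eq_final_of_reach_upd_v1_init {s : St} (h : Reach (upd v1 init) s) (hs : Stable s) :
    s = defaulted {v2, u2, w2} := by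
  rw [upd_v1_init] at h
  have h := h.reach_upd_of_stable onlyUpdatable_u2 hs
  rw [upd_u2] at h
  have h := h.reach_upd_of_stable onlyUpdatable_w2 hs
  rw [upd_w2] at h
  have h := h.reach_upd_of_stable onlyUpdatable_v1 hs
  rw [upd_v1] at h
  have h := h.reach_upd_of_stable onlyUpdatable_v2 hs
  rw [upd_v2] at h
  exact h.eq_of_stable stable_final

theorem rates_of_reach_upd_v1_init {s : St} (h : Reach (upd v1 init) s) (hs : Stable s) :
    s v1 = 1 ∧ s v2 = 0 := by
  simp [eq_final_of_reach_upd_v1_init h hs, defaulted]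

theorem rates_of_reach_upd_v2_init {s : St} (h : Reach (upd v2 init) s) (hs : Stable s) :
    s v1 = 0 ∧ s v2 = 1 := by
  have hinit : upd v2 init ∘ swap = upd v1 init := (upd_comp_swap v1 init).symm
  have hfinal := eq_final_of_reach_upd_v1_init (hinit ▸ h.comp_swap) hs.comp_swap
  exact ⟨by simpa [defaulted, swap] using congrFun hfinal v2,
    by simpa [defaulted, swap] using congrFun hfinal v1⟩

end Fig9

open Fig9 Fig9.Bank in
/-- in the Figure 9 system, only `v₁` and `v₂` can update initially; if `v₁`
updates first, the forced sequence of updates is `v₁ → u₂ → w₂ → v₁ → v₂` (at each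
intermediate state exactly the indicated bank is updatable), the resulting state is stable,
and every stable state reachable after `v₁`'s first update has `r_{v₁} = 1` and `r_{v₂} = 0`;
by symmetry, if `v₂` updates first, every reachable stable state has `r_{v₁} = 0` and
`r_{v₂} = 1`.  Hence `v₁` avoids default in the final state iff it defaults first. -/
theorem stmt16 :
    (∀ b, updatable b init ↔ (b = v1 ∨ b = v2)) ∧
    (∀ b, updatable b (upd v1 init) ↔ b = u2) ∧
    (∀ b, updatable b (upd u2 (upd v1 init)) ↔ b = w2) ∧
    (∀ b, updatable b (upd w2 (upd u2 (upd v1 init))) ↔ b = v1) ∧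
    (∀ b, updatable b (upd v1 (upd w2 (upd u2 (upd v1 init)))) ↔ b = v2) ∧
    (∀ b, ¬ updatable b (upd v2 (upd v1 (upd w2 (upd u2 (upd v1 init)))))) ∧
    (upd v2 (upd v1 (upd w2 (upd u2 (upd v1 init)))) v1 = 1 ∧
     upd v2 (upd v1 (upd w2 (upd u2 (upd v1 init)))) v2 = 0) ∧
    (∀ s, Reach (upd v1 init) s → (∀ b, ¬ updatable b s) → (s v1 = 1 ∧ s v2 = 0)) ∧
    (∀ s, Reach (upd v2 init) s → (∀ b, ¬ updatable b s) → (s v1 = 0 ∧ s v2 = 1)) := by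
  refine ⟨updatable_init_iff, ?_, ?_, ?_, ?_, ?_, ?_,
    fun _ => rates_of_reach_upd_v1_init, fun _ => rates_of_reach_upd_v2_init⟩ <;>
    simp only [upd_v1_init, upd_u2, upd_w2, upd_v1, upd_v2]
  exacts [onlyUpdatable_u2, onlyUpdatable_w2, onlyUpdatable_v1, onlyUpdatable_v2, stable_final,
    by simp [defaulted]]
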